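/- In the transition system for the single-use one-way line T = F₁ ∥ L₁ ∥ L₂ ∥ F₂ (Figure 17), the input event c₂ never causes output d₁: in every run of T starting from the initial state in which input a₁ never occurs, the output event d₁ never occurs. -/

import Mathlib

open Classical

noncomputable section

abbrev BExpr (E : Type) := (E → Bool) → Bool

def BDependsOn {E : Type} (l : BExpr E) (V : Set E) : Prop :=
  ∀ σ τ : E → Bool, (∀ a ∈ V, σ a = τ a) → l σ = l τ

def IsFullConj {E : Type} (l : BExpr E) (V : Set E) : Prop :=
  ∃ p : E → Bool, ∀ σ : E → Bool, (l σ = true ↔ ∀ a ∈ V, σ a = p a)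

def Matches' {E : Type} (I : Set E) (l : BExpr E) (A : Set E) : Prop :=
  ∃ σ : E → Bool, (∀ a ∈ I, (σ a = true ↔ a ∈ A)) ∧ l σ = true

def Sat {E : Type} (l : BExpr E) : Prop := ∃ σ, l σ = true

structure TS (E : Type) where
  S : Type
  i : S
  Ev : Set E
  I : Set E
  Tran : Set (S × BExpr E × S)

namespace TS

variable {E : Type}

/-- Constraint 1: determinism/totality of matching. -/
def C1 (T : TS E) : Prop :=
  ∀ s : T.S, ∀ A : Set E, A ⊆ T.I →
    ∃! t : BExpr E × T.S, ((s, t.1, t.2) ∈ T.Tran ∧ Matches' T.I t.1 A)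

/-- Constraint 2: every label has the form x·y, x ∈ Bool(I), y ∈ Conj(E∖I). -/
def C2 (T : TS E) : Prop :=
  ∀ ⦃s : T.S⦄ ⦃l : BExpr E⦄ ⦃s' : T.S⦄, (s, l, s') ∈ T.Tran →
    ∃ x y : BExpr E, BDependsOn x T.I ∧ IsFullConj y (T.Ev \ T.I) ∧
      ∀ σ, l σ = (x σ && y σ)

inductive Reach (T : TS E) : T.S → Prop
  | init : Reach T T.i
  | step {s : T.S} {l : BExpr E} {s' : T.S} :
      Reach T s → (s, l, s') ∈ T.Tran → Sat l → Reach T s'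

/-- Constraint 3: all states reachable. -/
def C3 (T : TS E) : Prop := ∀ s : T.S, Reach T s

/-- Constraint 4: a single output subexpression per state. -/
def C4 (T : TS E) : Prop :=
  ∀ s : T.S, ∃ y : BExpr E, IsFullConj y (T.Ev \ T.I) ∧
    ∀ ⦃l : BExpr E⦄ ⦃s' : T.S⦄, (s, l, s') ∈ T.Tran →
      ∃ x : BExpr E, BDependsOn x T.I ∧ ∀ σ, l σ = (x σ && y σ)

def WF (T : TS E) : Prop := T.I ⊆ T.Ev

/-- θ / hiding of shared variables: existentially quantify them away. -/
def hide (H : Set E) (l : BExpr E) : BExpr E :=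
  fun σ => decide (∃ τ : E → Bool, (∀ a ∉ H, τ a = σ a) ∧ l τ = true)

/-- Product T' = P × Q. -/
def prod (P Q : TS E) : TS E where
  S := P.S × Q.S
  i := (P.i, Q.i)
  Ev := P.Ev ∪ Q.Ev
  I := P.I ∪ Q.I
  Tran := { t | ∃ lP lQ : BExpr E,
      (t.1.1, lP, t.2.2.1) ∈ P.Tran ∧ (t.1.2, lQ, t.2.2.2) ∈ Q.Tran ∧
      t.2.1 = fun σ => lP σ && lQ σ }

/-- Composition T = P ∥ Q: satisfiable product transitions with shared events hidden. -/
def comp (P Q : TS E) : TS E where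
  S := P.S × Q.S
  i := (P.i, Q.i)
  Ev := (P.Ev ∪ Q.Ev) \ (P.Ev ∩ Q.Ev)
  I := (P.I ∪ Q.I) \ (P.Ev ∩ Q.Ev)
  Tran := { t | ∃ lP lQ : BExpr E,
      (t.1.1, lP, t.2.2.1) ∈ P.Tran ∧ (t.1.2, lQ, t.2.2.2) ∈ Q.Tran ∧
      Sat (fun σ => lP σ && lQ σ) ∧
      t.2.1 = hide (P.Ev ∩ Q.Ev) (fun σ => lP σ && lQ σ) }

/-- Condition D: every shared event is an input of exactly one of the systems. -/
def SharedOK (P Q : TS E) : Prop :=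
  ∀ a ∈ P.Ev ∩ Q.Ev, (a ∈ P.I ∧ a ∉ Q.I) ∨ (a ∈ Q.I ∧ a ∉ P.I)

def Composable (P Q : TS E) : Prop :=
  P.WF ∧ Q.WF ∧ P.C1 ∧ P.C2 ∧ P.C3 ∧ Q.C1 ∧ Q.C2 ∧ Q.C3 ∧ SharedOK P Q ∧
  (P.C4 ∨ Q.C4) ∧
  (¬ P.C4 → P.Ev ∩ Q.Ev = P.Ev \ P.I) ∧
  (¬ Q.C4 → P.Ev ∩ Q.Ev = Q.Ev \ Q.I)

/-- A run of the system under input sequence A. -/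
def Run (T : TS E) (A : ℕ → Set E) (r : ℕ → T.S) : Prop :=
  r 0 = T.i ∧ ∀ n : ℕ, ∃ l : BExpr E,
    (r n, l, r (n + 1)) ∈ T.Tran ∧ Matches' T.I l (A n)

/-- Output event e occurs at time t of the run. -/
def EmitsAt (T : TS E) (A : ℕ → Set E) (r : ℕ → T.S) (e : E) (t : ℕ) : Prop :=
  ∃ l : BExpr E, (r t, l, r (t + 1)) ∈ T.Tran ∧ Matches' T.I l (A t) ∧
    ∀ σ : E → Bool, l σ = true → σ e = true

end TS

/-- Single-use unit-length line: inputs a,c; outputs b,d. -/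
def lineTS {E : Type} (a b c d : E) : TS E where
  S := Fin 4
  i := 0
  Ev := {a, b, c, d}
  I := {a, c}
  Tran := {
    (0, fun σ => !σ a && !σ c && (!σ b && !σ d), 0),
    (0, fun σ => σ a && !σ c && (!σ b && !σ d), 1),
    (0, fun σ => !σ a && σ c && (!σ b && !σ d), 2),
    (0, fun σ => σ a && σ c && (!σ b && !σ d), 3),
    (1, fun σ => σ b && !σ d, 3),
    (2, fun σ => !σ b && σ d, 3),
    (3, fun σ => !σ b && !σ d, 3) }

/-- Single-use unit fork: stem (in c, out b); branches (in a, out d) and (in e, out f). -/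
def forkTS {E : Type} (a b c d e f : E) : TS E where
  S := Fin 4
  i := 0
  Ev := {a, b, c, d, e, f}
  I := {a, c, e}
  Tran := {
    (0, fun σ => !σ a && !σ c && !σ e && (!σ b && !σ d && !σ f), 0),
    (0, fun σ => !σ a && σ c && !σ e && (!σ b && !σ d && !σ f), 1),
    (0, fun σ => (σ a || σ e) && !σ c && (!σ b && !σ d && !σ f), 2),
    (0, fun σ => (σ a || σ e) && σ c && (!σ b && !σ d && !σ f), 3),
    (1, fun σ => !σ b && σ d && σ f, 3),
    (2, fun σ => σ b && !σ d && !σ f, 3),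
    (3, fun σ => !σ b && !σ d && !σ f, 3) }

/- Events (as natural numbers): fork F₁ ports a₁=1, b₁=2, c₁=3, d₁=4, e₁=5, f₁=6;
fork F₂ ports a₂=7, b₂=8, c₂=9, d₂=10, e₂=11, f₂=12; the joints of the length-5
line L₁ use 20–23 (forward) and 30–33 (backward); the joints of the length-3 line
L₂ use 40–41 and 50–51. External interface: inputs a₁=1, c₂=9; outputs d₁=4, b₂=8. -/
def F1 : TS ℕ := forkTS 1 2 3 4 5 6
def F2 : TS ℕ := forkTS 7 8 9 10 11 12
def U1 : TS ℕ := lineTS 2 20 30 3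
def U2 : TS ℕ := lineTS 20 21 31 30
def U3 : TS ℕ := lineTS 21 22 32 31
def U4 : TS ℕ := lineTS 22 23 33 32
def U5 : TS ℕ := lineTS 23 7 10 33
def V1 : TS ℕ := lineTS 6 40 50 5
def V2 : TS ℕ := lineTS 40 41 51 50
def V3 : TS ℕ := lineTS 41 11 12 51

/-- The single-use one-way line T = F₁ ∥ L₁ ∥ L₂ ∥ F₂ of Figures 16/17. -/
def OneWay : TS ℕ :=
  TS.comp (TS.comp (TS.comp (TS.comp (TS.comp (TS.comp (TS.comp (TS.comp
    (TS.comp F1 U1) U2) U3) U4) U5) V1) V2) V3) F2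

/-
With a₁ absent, a step of the composed system is driven by one valuation of all events,
internal wires included, under which each of the ten components takes a step; this works because
every wire is hidden as soon as both of its endpoints are composed and labels only read their own
events. A component's outputs are determined by its current state, so the successor state is a
function of the current state and of the input c₂ alone. From the initial state this function
reaches only seven states: the pulse from c₂ splits at F₂, the halves travel back along L₁ and L₂
and hit c₁ and e₁ of F₁ in the same step, which sends F₁ straight to its dead state. F₁ is never in
the state that emits d₁.
-/

namespace TS

variable {E : Type}

def Steps (T : TS E) (s s' : T.S) (σ : E → Bool) : Prop :=
  ∃ l : BExpr E, (s, l, s') ∈ T.Tran ∧ l σ = true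

def LocalLabels (T : TS E) : Prop :=
  ∀ ⦃s : T.S⦄ ⦃l : BExpr E⦄ ⦃s' : T.S⦄, (s, l, s') ∈ T.Tran → BDependsOn l T.Ev

theorem Steps.congr {T : TS E} (hT : T.LocalLabels) {s s' : T.S} {σ τ : E → Bool}
    (h : T.Steps s s' σ) (hστ : ∀ a ∈ T.Ev, σ a = τ a) : T.Steps s s' τ := by
  obtain ⟨l, hl, hσ⟩ := h
  exact ⟨l, hl, hT hl σ τ hστ ▸ hσ⟩

theorem Steps.of_comp {P Q : TS E} {s s' : P.S × Q.S} {σ : E → Bool}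
    (h : (comp P Q).Steps s s' σ) :
    ∃ τ : E → Bool, (∀ a ∉ P.Ev ∩ Q.Ev, τ a = σ a) ∧
      P.Steps s.1 s'.1 τ ∧ Q.Steps s.2 s'.2 τ := by
  obtain ⟨l, ⟨lP, lQ, hP, hQ, -, rfl⟩, hσ⟩ := h
  obtain ⟨τ, hτσ, hτ⟩ := of_decide_eq_true hσ
  rw [Bool.and_eq_true] at hτ
  exact ⟨τ, hτσ, ⟨lP, hP, hτ.1⟩, ⟨lQ, hQ, hτ.2⟩⟩

theorem mem_comp_I {P Q : TS E} {a : E} (hP : a ∈ P.I) (hQ : a ∉ Q.Ev) : a ∈ (comp P Q).I :=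
  ⟨Or.inl hP, fun h => hQ h.2⟩

/-- Every valuation driving the step `s → s'` of `T` can be altered on `K` into one satisfying
`Φ`. The bound `L` on the events of `T` keeps the hidden sets of nested compositions explicit. -/
def StepLift (T : TS E) (s s' : T.S) (L K : Set E) (Φ : (E → Bool) → Prop) : Prop :=
  T.Ev ⊆ L ∧ ∀ σ, T.Steps s s' σ → ∃ ρ : E → Bool, (∀ a ∉ K, ρ a = σ a) ∧ Φ ρ

theorem stepLift_self (T : TS E) (s s' : T.S) : T.StepLift s s' T.Ev ∅ (T.Steps s s') :=
  ⟨subset_rfl, fun σ h => ⟨σ, fun _ _ => rfl, h⟩⟩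

theorem StepLift.comp {P Q : TS E} {s s' : P.S × Q.S} {L K : Set E}
    {Φ : (E → Bool) → Prop} (hP : P.StepLift s.1 s'.1 L K Φ) (hQ : Q.LocalLabels)
    (hKQ : Disjoint K Q.Ev) :
    (comp P Q).StepLift s s' (L ∪ Q.Ev) (K ∪ L ∩ Q.Ev)
      (fun ρ => Φ ρ ∧ Q.Steps s.2 s'.2 ρ) := by
  refine ⟨Set.sdiff_subset.trans (Set.union_subset_union_left _ hP.1), fun σ h => ?_⟩
  obtain ⟨τ, hτσ, hτP, hτQ⟩ := h.of_comp
  obtain ⟨ρ, hρτ, hΦ⟩ := hP.2 τ hτP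
  refine ⟨ρ, fun a ha => ?_, hΦ, hτQ.congr hQ fun a ha => (hρτ a ?_).symm⟩
  · rw [Set.mem_union, not_or] at ha
    exact (hρτ a ha.1).trans (hτσ a fun h => ha.2 ⟨hP.1 h.1, h.2⟩)
  · exact Set.disjoint_right.1 hKQ ha

theorem Run.exists_steps {T : TS E} {A : ℕ → Set E} {r : ℕ → T.S} (hr : T.Run A r) (n : ℕ) :
    ∃ σ : E → Bool, (∀ a ∈ T.I, σ a = true ↔ a ∈ A n) ∧ T.Steps (r n) (r (n + 1)) σ := by
  obtain ⟨l, hl, σ, hσA, hσ⟩ := hr.2 n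
  exact ⟨σ, hσA, l, hl, hσ⟩

theorem EmitsAt.exists_steps {T : TS E} {A : ℕ → Set E} {r : ℕ → T.S} {e : E} {t : ℕ}
    (h : T.EmitsAt A r e t) :
    ∃ σ : E → Bool, (∀ a ∈ T.I, σ a = true ↔ a ∈ A t) ∧ T.Steps (r t) (r (t + 1)) σ ∧
      σ e = true := by
  obtain ⟨l, hl, ⟨σ, hσA, hσ⟩, hemit⟩ := h
  exact ⟨σ, hσA, ⟨l, hl, hσ⟩, hemit σ hσ⟩

end TS

section Components

variable {E : Type} (a b c d e f : E)

def lineNext : Fin 4 → Bool → Bool → Fin 4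
  | 0, false, false => 0
  | 0, true, false => 1
  | 0, false, true => 2
  | _, _, _ => 3

def forkNext : Fin 4 → Bool → Bool → Bool → Fin 4
  | 0, a, c, e => if a || e then (if c then 3 else 2) else (if c then 1 else 0)
  | _, _, _, _ => 3

theorem lineTS_Ev : (lineTS a b c d).Ev = {a, b, c, d} := rfl

theorem forkTS_Ev : (forkTS a b c d e f).Ev = {a, b, c, d, e, f} := rfl

theorem lineTS_localLabels : (lineTS a b c d).LocalLabels := by
  intro s l s' h σ τ hστ
  have ha := hστ a (by simp [lineTS])
  have hb := hστ b (by simp [lineTS])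
  have hc := hστ c (by simp [lineTS])
  have hd := hστ d (by simp [lineTS])
  change _ ∈ (_ : Set (Fin 4 × BExpr E × Fin 4)) at h
  simp only [lineTS, Set.mem_insert_iff, Set.mem_singleton_iff] at h
  rcases h with ⟨-, rfl, -⟩ | ⟨-, rfl, -⟩ | ⟨-, rfl, -⟩ | ⟨-, rfl, -⟩ | ⟨-, rfl, -⟩ |
    ⟨-, rfl, -⟩ | ⟨-, rfl, -⟩ <;> simp only [ha, hb, hc, hd]

theorem forkTS_localLabels : (forkTS a b c d e f).LocalLabels := by
  intro s l s' h σ τ hστ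
  have ha := hστ a (by simp [forkTS])
  have hb := hστ b (by simp [forkTS])
  have hc := hστ c (by simp [forkTS])
  have hd := hστ d (by simp [forkTS])
  have he := hστ e (by simp [forkTS])
  have hf := hστ f (by simp [forkTS])
  change _ ∈ (_ : Set (Fin 4 × BExpr E × Fin 4)) at h
  simp only [forkTS, Set.mem_insert_iff, Set.mem_singleton_iff] at h
  rcases h with ⟨-, rfl, -⟩ | ⟨-, rfl, -⟩ | ⟨-, rfl, -⟩ | ⟨-, rfl, -⟩ | ⟨-, rfl, -⟩ |
    ⟨-, rfl, -⟩ | ⟨-, rfl, -⟩ <;> simp only [ha, hb, hc, hd, he, hf]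

variable {a b c d e f}

theorem lineTS_steps {s s' : Fin 4} {σ : E → Bool} (h : (lineTS a b c d).Steps s s' σ) :
    σ b = (s == 1) ∧ σ d = (s == 2) ∧ s' = lineNext s (σ a) (σ c) := by
  obtain ⟨l, h, hσ⟩ := h
  change _ ∈ (_ : Set (Fin 4 × BExpr E × Fin 4)) at h
  simp only [lineTS, Set.mem_insert_iff, Set.mem_singleton_iff, Prod.mk.injEq] at h
  rcases h with ⟨rfl, rfl, rfl⟩ | ⟨rfl, rfl, rfl⟩ | ⟨rfl, rfl, rfl⟩ | ⟨rfl, rfl, rfl⟩ |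
    ⟨rfl, rfl, rfl⟩ | ⟨rfl, rfl, rfl⟩ | ⟨rfl, rfl, rfl⟩ <;>
    simp only [Bool.and_eq_true, Bool.not_eq_true'] at hσ <;> simp [lineNext, hσ]

theorem forkTS_steps {s s' : Fin 4} {σ : E → Bool} (h : (forkTS a b c d e f).Steps s s' σ) :
    σ b = (s == 2) ∧ σ d = (s == 1) ∧ σ f = (s == 1) ∧
      s' = forkNext s (σ a) (σ c) (σ e) := by
  obtain ⟨l, h, hσ⟩ := h
  change _ ∈ (_ : Set (Fin 4 × BExpr E × Fin 4)) at h
  simp only [forkTS, Set.mem_insert_iff, Set.mem_singleton_iff, Prod.mk.injEq] at h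
  rcases h with ⟨rfl, rfl, rfl⟩ | ⟨rfl, rfl, rfl⟩ | ⟨rfl, rfl, rfl⟩ | ⟨rfl, rfl, rfl⟩ |
    ⟨rfl, rfl, rfl⟩ | ⟨rfl, rfl, rfl⟩ | ⟨rfl, rfl, rfl⟩ <;>
    simp only [Bool.and_eq_true, Bool.not_eq_true', Bool.or_eq_true] at hσ <;>
    simp [forkNext, hσ]

end Components

abbrev OneWayState : Type :=
  (((((((((Fin 4 × Fin 4) × Fin 4) × Fin 4) × Fin 4) × Fin 4) × Fin 4) × Fin 4) × Fin 4) × Fin 4)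

def OneWayState.fork₁ (s : OneWayState) : Fin 4 := s.1.1.1.1.1.1.1.1.1

def oneWayNext : OneWayState → Bool → OneWayState
  | (((((((((f₁, u₁), u₂), u₃), u₄), u₅), v₁), v₂), v₃), f₂), c₂ =>
    (((((((((forkNext f₁ false (u₁ == 2) (v₁ == 2),
      lineNext u₁ (f₁ == 2) (u₂ == 2)),
      lineNext u₂ (u₁ == 1) (u₃ == 2)),
      lineNext u₃ (u₂ == 1) (u₄ == 2)),
      lineNext u₄ (u₃ == 1) (u₅ == 2)),
      lineNext u₅ (u₄ == 1) (f₂ == 1)),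
      lineNext v₁ (f₁ == 1) (v₂ == 2)),
      lineNext v₂ (v₁ == 1) (v₃ == 2)),
      lineNext v₃ (v₂ == 1) (f₂ == 1)),
      forkNext f₂ (u₅ == 1) c₂ (v₃ == 1))

theorem oneWay_step {s s' : OneWayState} {σ : ℕ → Bool} (h : OneWay.Steps s s' σ)
    (h₁ : σ 1 = false) : σ 4 = (s.fork₁ == 1) ∧ s' = oneWayNext s (σ 9) := by
  refine (fun hlift => ?_) ((((((((((TS.stepLift_self F1 _ _).comp
    (lineTS_localLabels _ _ _ _) ?_).comp (lineTS_localLabels _ _ _ _) ?_).comp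
    (lineTS_localLabels _ _ _ _) ?_).comp (lineTS_localLabels _ _ _ _) ?_).comp
    (lineTS_localLabels _ _ _ _) ?_).comp (lineTS_localLabels _ _ _ _) ?_).comp
    (lineTS_localLabels _ _ _ _) ?_).comp (lineTS_localLabels _ _ _ _) ?_).comp
    (forkTS_localLabels _ _ _ _ _ _) ?_ : OneWay.StepLift s s' _ _ _)
  · obtain ⟨ρ, hρσ, ⟨⟨⟨⟨⟨⟨⟨⟨⟨hF₁, hU₁⟩, hU₂⟩, hU₃⟩, hU₄⟩, hU₅⟩, hV₁⟩, hV₂⟩, hV₃⟩, hF₂⟩⟩ :=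
      hlift.2 σ h
    have hρ : ∀ a, a = 1 ∨ a = 4 ∨ a = 9 → ρ a = σ a := fun a ha =>
      hρσ a (by rcases ha with rfl | rfl | rfl <;> simp [F1, F2, lineTS_Ev, forkTS_Ev])
    obtain ⟨⟨⟨⟨⟨⟨⟨⟨⟨f₁, u₁⟩, u₂⟩, u₃⟩, u₄⟩, u₅⟩, v₁⟩, v₂⟩, v₃⟩, f₂⟩ := s
    obtain ⟨⟨⟨⟨⟨⟨⟨⟨⟨f₁', u₁'⟩, u₂'⟩, u₃'⟩, u₄'⟩, u₅'⟩, v₁'⟩, v₂'⟩, v₃'⟩, f₂'⟩ := s'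
    obtain ⟨w2, w4, w6, rfl⟩ := forkTS_steps hF₁
    obtain ⟨-, w10, w12, rfl⟩ := forkTS_steps hF₂
    obtain ⟨w20, w3, rfl⟩ := lineTS_steps hU₁
    obtain ⟨w21, w30, rfl⟩ := lineTS_steps hU₂
    obtain ⟨w22, w31, rfl⟩ := lineTS_steps hU₃
    obtain ⟨w23, w32, rfl⟩ := lineTS_steps hU₄
    obtain ⟨w7, w33, rfl⟩ := lineTS_steps hU₅
    obtain ⟨w40, w5, rfl⟩ := lineTS_steps hV₁
    obtain ⟨w41, w50, rfl⟩ := lineTS_steps hV₂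
    obtain ⟨w11, w51, rfl⟩ := lineTS_steps hV₃
    rw [← hρ 4 (by omega), ← hρ 9 (by omega), hρ 1 (by omega), h₁]
    refine ⟨w4, ?_⟩
    simp only [oneWayNext, w2, w6, w10, w12, w20, w3, w21, w30, w22, w31, w23, w32, w7, w33,
      w40, w5, w41, w50, w11, w51]
  all_goals
    simp only [Set.disjoint_right, F1, F2, lineTS_Ev, forkTS_Ev, Set.mem_insert_iff,
      Set.mem_singleton_iff, or_imp, forall_and, forall_eq]
    simp

theorem one_mem_oneWay_I : 1 ∈ OneWay.I := by
  unfold OneWay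
  repeat' refine TS.mem_comp_I ?_ ?_
  all_goals simp [F1, F2, U1, U2, U3, U4, U5, V1, V2, V3, lineTS, forkTS]

def oneWayReachable : List OneWayState :=
  [(((((((((0, 0), 0), 0), 0), 0), 0), 0), 0), 0),
   (((((((((0, 0), 0), 0), 0), 0), 0), 0), 0), 1),
   (((((((((0, 0), 0), 0), 0), 2), 0), 0), 2), 3),
   (((((((((0, 0), 0), 0), 2), 3), 0), 2), 3), 3),
   (((((((((0, 0), 0), 2), 3), 3), 2), 3), 3), 3),
   (((((((((2, 0), 2), 3), 3), 3), 3), 3), 3), 3),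
   (((((((((3, 3), 3), 3), 3), 3), 3), 3), 3), 3)]

theorem oneWayNext_mem_reachable :
    ∀ s ∈ oneWayReachable, ∀ c, oneWayNext s c ∈ oneWayReachable := by
  simp [oneWayReachable, oneWayNext, lineNext, forkNext]

theorem fork₁_ne_one_of_mem_reachable : ∀ s ∈ oneWayReachable, s.fork₁ ≠ 1 := by
  simp [oneWayReachable, OneWayState.fork₁]

theorem oneWay_input_one_eq_false {A : Set ℕ} (h1 : 1 ∉ A) {σ : ℕ → Bool}
    (hσA : ∀ a ∈ OneWay.I, σ a = true ↔ a ∈ A) : σ 1 = false :=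
  Bool.eq_false_iff.mpr fun h => h1 ((hσA 1 one_mem_oneWay_I).1 h)

theorem oneWay_run_mem_reachable {A : ℕ → Set ℕ} (hnoa : ∀ n, 1 ∉ A n) {r : ℕ → OneWay.S}
    (hr : TS.Run OneWay A r) (n : ℕ) : r n ∈ oneWayReachable := by
  induction n with
  | zero => rw [hr.1]; exact List.mem_cons_self
  | succ n ih =>
    obtain ⟨σ, hσA, hstep⟩ := hr.exists_steps n
    rw [(oneWay_step hstep (oneWay_input_one_eq_false (hnoa n) hσA)).2]
    exact oneWayNext_mem_reachable _ ih _

theorem stmt16_general (A : ℕ → Set ℕ)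
    (hnoa : ∀ n, (1 : ℕ) ∉ A n)
    (r : ℕ → OneWay.S) (hr : TS.Run OneWay A r) :
    ∀ t : ℕ, ¬ TS.EmitsAt OneWay A r 4 t := by
  intro t hemit
  obtain ⟨σ, hσA, hstep, hσ₄⟩ := hemit.exists_steps
  have hd₁ := (oneWay_step hstep (oneWay_input_one_eq_false (hnoa t) hσA)).1
  exact fork₁_ne_one_of_mem_reachable _ (oneWay_run_mem_reachable hnoa hr t)
    (beq_iff_eq.mp (hd₁ ▸ hσ₄))

/-- in every run of the one-way line in which input a₁ (= 1) never
occurs, output d₁ (= 4) never occurs: c₂ never causes d₁. -/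
theorem stmt16 (A : ℕ → Set ℕ) (hA : ∀ n, A n ⊆ OneWay.I)
    (hnoa : ∀ n, (1 : ℕ) ∉ A n)
    (r : ℕ → OneWay.S) (hr : TS.Run OneWay A r) :
    ∀ t : ℕ, ¬ TS.EmitsAt OneWay A r 4 t :=
  stmt16_general A hnoa r hr
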